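/- Let Γ be a maximally Log-consistent set. For every finite nonempty subset Φ ⊆ Γ[I], the conjunction ⋀Φ belongs to Γ[I]. -/
import Mathlib


/-- Formulas of classical propositional logic `L_CPL` over a countable set
of atomic propositions (represented by natural numbers). -/
inductive CPL : Type
  | top : CPL
  | atom : ℕ → CPL
  | neg : CPL → CPL
  | or : CPL → CPL → CPL
  | and : CPL → CPL → CPL
  deriving DecidableEq
/-- `Var(φ)`: the (finite) set of atomic propositions occurring in `φ`. -/
def CPL.var : CPL → Finset ℕ
  | .top => ∅
  | .atom p => {p}
  | .neg φ => φ.var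
  | .or φ ψ => φ.var ∪ ψ.var
  | .and φ ψ => φ.var ∪ ψ.var

/-- `p̄ := p ∨ ¬p`. -/
def pbar (p : ℕ) : CPL := .or (.atom p) (.neg (.atom p))

/-- Conjunction of a list of `L_CPL` formulas (empty conjunction is `⊤`). -/
def conjList : List CPL → CPL
  | [] => .top
  | [α] => α
  | α :: β :: rest => .and α (conjList (β :: rest))

/-- `φ̄ := ⋀_{p ∈ Var(φ)} (p ∨ ¬p)`, with the conjuncts taken in the fixed
(increasing) enumeration order of the atomic propositions. -/
def CPL.bar (φ : CPL) : CPL := conjList ((φ.var.sort (· ≤ ·)).map pbar)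
/-- Formulas of the language `L_Int`, extending `L_CPL` (embedded via `of`) by
negation, disjunction, conjunction, the global modality `⊞` (`box`) and the
intention modality `I` (`int`), which applies only to `L_CPL` formulas. -/
inductive Form : Type
  | of : CPL → Form
  | neg : Form → Form
  | or : Form → Form → Form
  | and : Form → Form → Form
  | box : Form → Form
  | int : CPL → Form
  deriving DecidableEq
/-- Material implication in `L_Int`: `φ → ψ := ¬φ ∨ ψ`. -/
def Form.imp (φ ψ : Form) : Form := .or (.neg φ) ψ

/-- Material biconditional in `L_Int`: `φ ↔ ψ := (φ → ψ) ∧ (ψ → φ)`. -/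
def Form.iff (φ ψ : Form) : Form := .and (φ.imp ψ) (ψ.imp φ)

/-- `⊥ := ¬⊤`. -/
def Form.bot : Form := .neg (.of .top)

/-- Boolean evaluation of `L_CPL` formulas under a valuation of the atoms. -/
def CPL.eval (v : ℕ → Bool) : CPL → Bool
  | .top => true
  | .atom p => v p
  | .neg φ => !φ.eval v
  | .or φ ψ => φ.eval v || ψ.eval v
  | .and φ ψ => φ.eval v && ψ.eval v

/-- Boolean evaluation of `L_Int` formulas, treating `⊞`- and `I`-formulas as
atoms (evaluated by `u`). -/
def Form.eval (v : ℕ → Bool) (u : Form → Bool) : Form → Bool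
  | .of α => α.eval v
  | .neg φ => !φ.eval v u
  | .or φ ψ => φ.eval v u || ψ.eval v u
  | .and φ ψ => φ.eval v u && ψ.eval v u
  | .box φ => u (.box φ)
  | .int α => u (.int α)

/-- Classical propositional tautologies of `L_Int` (with modal formulas
treated as atoms). -/
def Taut (φ : Form) : Prop := ∀ v u, φ.eval v u = true

/-- Derivability in the proof system `Log`: classical tautologies and Modus
Ponens; `S5` axioms and necessitation for `⊞`; and the intention axioms
Ax1: `I⊤`; Ax2: `Iφ → Iφ̄`; Ax3: `Iφ → ¬I¬φ`; Ax4: `(Iφ ∧ Iψ) ↔ I(φ ∧ ψ)`;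
Ax5: `⊞(ψ → φ) → ((Iψ ∧ Iφ̄) → Iφ)`. -/
inductive Deriv : Set Form → Form → Prop
  | prem {Γ : Set Form} {φ : Form} : φ ∈ Γ → Deriv Γ φ
  | taut {Γ : Set Form} {φ : Form} : Taut φ → Deriv Γ φ
  | mp {Γ : Set Form} {φ ψ : Form} :
      Deriv Γ (φ.imp ψ) → Deriv Γ φ → Deriv Γ ψ
  | boxK {Γ : Set Form} (φ ψ : Form) :
      Deriv Γ ((Form.box (φ.imp ψ)).imp ((Form.box φ).imp (Form.box ψ)))
  | boxT {Γ : Set Form} (φ : Form) : Deriv Γ ((Form.box φ).imp φ)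
  | box5 {Γ : Set Form} (φ : Form) :
      Deriv Γ ((Form.neg (Form.box φ)).imp (Form.box (Form.neg (Form.box φ))))
  | nec {Γ : Set Form} {φ : Form} : Deriv ∅ φ → Deriv Γ (Form.box φ)
  | ax1 {Γ : Set Form} : Deriv Γ (Form.int .top)
  | ax2 {Γ : Set Form} (α : CPL) :
      Deriv Γ ((Form.int α).imp (Form.int α.bar))
  | ax3 {Γ : Set Form} (α : CPL) :
      Deriv Γ ((Form.int α).imp (Form.neg (Form.int (CPL.neg α))))
  | ax4 {Γ : Set Form} (α β : CPL) :
      Deriv Γ ((Form.and (.int α) (.int β)).iff (Form.int (.and α β)))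
  | ax5 {Γ : Set Form} (α β : CPL) :
      Deriv Γ ((Form.box ((Form.of β).imp (Form.of α))).imp
        ((Form.and (.int β) (.int α.bar)).imp (Form.int α)))

/-- A set of formulas is `Log`-consistent if `⊥` is not derivable from it. -/
def LogConsistent (Γ : Set Form) : Prop := ¬ Deriv Γ Form.bot

/-- A maximally `Log`-consistent set: consistent with no proper consistent
extension. -/
def MCS (Γ : Set Form) : Prop :=
  LogConsistent Γ ∧ ∀ Δ, LogConsistent Δ → Γ ⊆ Δ → Δ = Γ
/-- `Γ[⊞] = {φ : ⊞φ ∈ Γ}`. -/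
def boxSet (Γ : Set Form) : Set Form := {φ | Form.box φ ∈ Γ}

/-- `Γ[I] = {φ ∈ L_Int : Iψ ∧ ⊞(ψ → φ) ∈ Γ for some ψ ∈ L_CPL}`. -/
def intSet (Γ : Set Form) : Set Form :=
  {φ | ∃ ψ : CPL, Form.and (Form.int ψ) (Form.box ((Form.of ψ).imp φ)) ∈ Γ}

/-- Conjunction of a (nonempty) list of `L_Int` formulas. -/
def conjFormList : List Form → Form
  | [] => .of .top
  | [φ] => φ
  | φ :: ψ :: rest => .and φ (conjFormList (ψ :: rest))

lemma Deriv.cut' {Γ : Set Form} {φ ψ : Form} (hφ : Deriv Γ φ)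
    (h : Deriv (insert φ Γ) ψ) : Deriv Γ ψ := by
  have key : ∀ {Δ : Set Form} {χ : Form}, Deriv Δ χ → Δ = insert φ Γ → Deriv Γ χ := by
    intro Δ χ h
    induction h with
    | prem hm =>
        intro he; subst he
        rcases Set.mem_insert_iff.mp hm with rfl | h
        · exact hφ
        · exact .prem h
    | taut ht => intro _; exact .taut ht
    | mp _ _ ih1 ih2 => intro he; exact .mp (ih1 he) (ih2 he)
    | boxK α β => intro _; exact .boxK α β
    | boxT α => intro _; exact .boxT α
    | box5 α => intro _; exact .box5 α
    | nec h _ => intro _; exact .nec h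
    | ax1 => intro _; exact .ax1
    | ax2 α => intro _; exact .ax2 α
    | ax3 α => intro _; exact .ax3 α
    | ax4 α β => intro _; exact .ax4 α β
    | ax5 α β => intro _; exact .ax5 α β
  exact key h rfl

lemma MCS.mem_of_deriv {Γ : Set Form} (hΓ : MCS Γ) {φ : Form}
    (h : Deriv Γ φ) : φ ∈ Γ := by
  have hcons : LogConsistent (insert φ Γ) := fun hb => hΓ.1 (h.cut' hb)
  have heq := hΓ.2 _ hcons (Set.subset_insert _ _)
  rw [← heq]; exact Set.mem_insert _ _

lemma tautAndL (A B : Form) : Taut ((Form.and A B).imp A) := by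
  intro v u
  simp only [Form.imp, Form.eval]
  cases A.eval v u <;> cases B.eval v u <;> rfl

lemma tautAndR (A B : Form) : Taut ((Form.and A B).imp B) := by
  intro v u
  simp only [Form.imp, Form.eval]
  cases A.eval v u <;> cases B.eval v u <;> rfl

lemma tautAndIntro (A B : Form) : Taut (A.imp (B.imp (A.and B))) := by
  intro v u
  simp only [Form.imp, Form.eval]
  cases A.eval v u <;> cases B.eval v u <;> rfl

lemma tautBig (ψ₁ ψ₂ : CPL) (φ χ : Form) :
    Taut (((Form.of ψ₁).imp φ).imp (((Form.of ψ₂).imp χ).imp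
      ((Form.of (ψ₁.and ψ₂)).imp (Form.and φ χ)))) := by
  intro v u
  simp only [Form.imp, Form.eval, CPL.eval]
  cases ψ₁.eval v <;> cases ψ₂.eval v <;> cases φ.eval v u <;> cases χ.eval v u <;> rfl

lemma and_mem_intSet {Γ : Set Form} (hΓ : MCS Γ) {φ χ : Form}
    (h1 : φ ∈ intSet Γ) (h2 : χ ∈ intSet Γ) : Form.and φ χ ∈ intSet Γ := by
  obtain ⟨ψ₁, hm1⟩ := h1
  obtain ⟨ψ₂, hm2⟩ := h2
  have d1 : Deriv Γ (Form.int ψ₁) := .mp (.taut (tautAndL _ _)) (.prem hm1)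
  have d1' : Deriv Γ (Form.box ((Form.of ψ₁).imp φ)) :=
    .mp (.taut (tautAndR _ _)) (.prem hm1)
  have d2 : Deriv Γ (Form.int ψ₂) := .mp (.taut (tautAndL _ _)) (.prem hm2)
  have d2' : Deriv Γ (Form.box ((Form.of ψ₂).imp χ)) :=
    .mp (.taut (tautAndR _ _)) (.prem hm2)
  have hI : Deriv Γ (Form.int (ψ₁.and ψ₂)) := by
    have hpair : Deriv Γ (Form.and (.int ψ₁) (.int ψ₂)) :=
      .mp (.mp (.taut (tautAndIntro _ _)) d1) d2
    have hax : Deriv Γ ((Form.and (.int ψ₁) (.int ψ₂)).iff (Form.int (.and ψ₁ ψ₂))) :=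
      Deriv.ax4 ψ₁ ψ₂
    exact .mp (.mp (.taut (tautAndL _ _)) hax) hpair
  have hbox : Deriv Γ (Form.box ((Form.of (ψ₁.and ψ₂)).imp (Form.and φ χ))) := by
    have ht : Deriv (∅ : Set Form) (((Form.of ψ₁).imp φ).imp
        (((Form.of ψ₂).imp χ).imp ((Form.of (ψ₁.and ψ₂)).imp (Form.and φ χ)))) :=
      .taut (tautBig ψ₁ ψ₂ φ χ)
    have hb : Deriv Γ _ := Deriv.nec ht
    have step1 := Deriv.mp (.mp (.boxK _ _) hb) d1'
    exact .mp (.mp (.boxK _ _) step1) d2'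
  exact ⟨ψ₁.and ψ₂, hΓ.mem_of_deriv (.mp (.mp (.taut (tautAndIntro _ _)) hI) hbox)⟩

/-- For a maximally `Log`-consistent set `Γ` and every finite
nonempty `Φ ⊆ Γ[I]` (given as a list of its members), the conjunction `⋀Φ`
belongs to `Γ[I]`. -/
theorem conj_mem_intSet (Γ : Set Form) (hΓ : MCS Γ) (l : List Form)
    (hne : l ≠ []) (h : ∀ φ ∈ l, φ ∈ intSet Γ) :
    conjFormList l ∈ intSet Γ := by
  induction l with
  | nil => exact absurd rfl hne
  | cons φ rest ih =>
    cases rest with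
    | nil => simpa [conjFormList] using h φ (by simp)
    | cons ψ rest' =>
      have h1 := h φ (by simp)
      have h2 : conjFormList (ψ :: rest') ∈ intSet Γ :=
        ih (by simp) (fun x hx => h x (by simp [hx]))
      show Form.and φ (conjFormList (ψ :: rest')) ∈ intSet Γ
      exact and_mem_intSet hΓ h1 h2
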